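/- arXiv:2501.04658 — 2 statements merged into one kernel-verified Lean document; each statement's English description precedes it below -/
import Mathlib

section
/- Let 𝔛 and 𝔜 be Polish spaces, μ a probability measure on 𝔛 and ν a probability measure on 𝔜. If the cost function c satisfies c(x,y,x',y') = φ((x,y),(x',y')) for some φ:(𝔛×𝔜)×(𝔛×𝔜)→ℝ that is bounded, continuous, symmetric, and positive definite (i.e., for every n∈ℕ, points s₁,…,s_n ∈ 𝔛×𝔜 and reals c₁,…,c_n one has ∑_{i=1}^n ∑_{j=1}^n c_i c_j φ(s_i,s_j) ≥ 0), then the map π ↦ ∬ c(x,y,x',y') dπ(x,y) dπ(x',y') is a convex function of π on Π(μ,ν). -/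
open MeasureTheory Set Filter Topology

lemma aux_map_eval {ι Z : Type*} [Fintype ι] [MeasurableSpace Z]
    (P : ι → Measure Z) [∀ i, IsProbabilityMeasure (P i)] (i : ι) :
    (Measure.pi P).map (Function.eval i) = P i := by
  classical
  ext s hs
  rw [Measure.map_apply (measurable_pi_apply i) hs]
  have h1 : Function.eval i ⁻¹' s
      = Set.pi Set.univ (Function.update (fun _ : ι => (Set.univ : Set Z)) i s) := by
    ext ω
    simp only [Set.mem_preimage, Set.mem_univ_pi]
    constructor
    · intro h j
      rcases eq_or_ne j i with rfl | hj
      · simpa using h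
      · simp [Function.update_of_ne hj]
    · intro h
      have := h i
      simpa using this
  rw [h1, Measure.pi_pi]
  rw [Fintype.prod_eq_single i (fun j hj => by simp [Function.update_of_ne hj])]
  simp

lemma aux_map_eval_pair {ι Z : Type*} [Fintype ι] [MeasurableSpace Z]
    (P : ι → Measure Z) [∀ i, IsProbabilityMeasure (P i)] {i j : ι} (hij : i ≠ j) :
    (Measure.pi P).map (fun ω => (ω i, ω j)) = (P i).prod (P j) := by
  classical
  refine (Measure.prod_eq fun s t hs ht => ?_).symm
  rw [Measure.map_apply ((measurable_pi_apply i).prodMk (measurable_pi_apply j)) (hs.prod ht)]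
  have h1 : (fun ω : ι → Z => (ω i, ω j)) ⁻¹' (s ×ˢ t)
      = Set.pi Set.univ (Function.update (Function.update (fun _ : ι => (Set.univ : Set Z)) i s) j t) := by
    ext ω
    simp only [Set.mem_preimage, Set.mem_prod, Set.mem_univ_pi]
    constructor
    · intro h k
      rcases eq_or_ne k j with rfl | hkj
      · simp [Function.update_self, h.2]
      · rcases eq_or_ne k i with rfl | hki
        · simp [Function.update_of_ne hkj, Function.update_self, h.1]
        · simp [Function.update_of_ne hkj, Function.update_of_ne hki]
    · intro h
      constructor
      · have := h i
        simpa [Function.update_of_ne hij] using this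
      · have := h j
        simpa using this
  rw [h1, Measure.pi_pi]
  rw [Fintype.prod_eq_mul i j hij (fun k hk => by
    simp [Function.update_of_ne hk.2, Function.update_of_ne hk.1])]
  simp [Function.update_of_ne hij]


section aux
variable {Z : Type*} [MeasurableSpace Z]

lemma aux_integrable_of_bound (m : Measure Z) [IsFiniteMeasure m] (f : Z → ℝ)
    (hf : AEStronglyMeasurable f m) (M : ℝ) (h : ∀ z, |f z| ≤ M) : Integrable f m :=
  ⟨hf, HasFiniteIntegral.of_bounded (C := M) (ae_of_all _ (fun z => by
    simpa [Real.norm_eq_abs] using h z))⟩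

lemma aux_abs_integral_le (m : Measure Z) [IsProbabilityMeasure m] (f : Z → ℝ) (M : ℝ)
    (h : ∀ z, |f z| ≤ M) : |∫ z, f z ∂m| ≤ M := by
  have := norm_integral_le_of_norm_le_const (μ := m) (f := f) (C := M)
    (ae_of_all _ (fun z => by simpa [Real.norm_eq_abs] using h z))
  simpa [Real.norm_eq_abs] using this
end aux

lemma aux_posdef_fintype {Z : Type*} (c : Z → Z → ℝ)
    (hposdef : ∀ (n : ℕ) (s : Fin n → Z) (a : Fin n → ℝ),
      0 ≤ ∑ i : Fin n, ∑ j : Fin n, a i * a j * c (s i) (s j))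
    (ι : Type) [Fintype ι] (s : ι → Z) (a : ι → ℝ) :
    0 ≤ ∑ i : ι, ∑ j : ι, a i * a j * c (s i) (s j) := by
  classical
  set f : ι → ι → ℝ := fun i j => a i * a j * c (s i) (s j) with hf
  let e := Fintype.equivFin ι
  have h := hposdef (Fintype.card ι) (s ∘ e.symm) (a ∘ e.symm)
  have h2 : ∑ k, (∑ l, f (e.symm k) (e.symm l)) = ∑ i, ∑ j, f i j := by
    rw [Equiv.sum_comp e.symm (fun i => ∑ l, f i (e.symm l))]
    exact Finset.sum_congr rfl fun i _ => Equiv.sum_comp e.symm (f i)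
  rw [← h2]
  exact h
lemma aux_energy {Z : Type*} [MeasurableSpace Z] [TopologicalSpace Z] [PolishSpace Z]
    [BorelSpace Z] (c : Z → Z → ℝ) (M : ℝ) (hM : ∀ z z', |c z z'| ≤ M)
    (hcont : Continuous (Function.uncurry c))
    (hpos : ∀ (ι : Type) [Fintype ι] (s : ι → Z) (a : ι → ℝ),
      0 ≤ ∑ i : ι, ∑ j : ι, a i * a j * c (s i) (s j))
    (p q : Measure Z) [IsProbabilityMeasure p] [IsProbabilityMeasure q] :
    (∫ z, ∫ z', c z z' ∂q ∂p) + (∫ z, ∫ z', c z z' ∂p ∂q) ≤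
      (∫ z, ∫ z', c z z' ∂p ∂p) + (∫ z, ∫ z', c z z' ∂q ∂q) := by
  classical
  have hsm : StronglyMeasurable (Function.uncurry c) := hcont.stronglyMeasurable
  -- notation for double integrals
  set B : Measure Z → Measure Z → ℝ := fun m m' => ∫ z, ∫ z', c z z' ∂m' ∂m with hB
  have hBabs : ∀ (m m' : Measure Z), IsProbabilityMeasure m → IsProbabilityMeasure m' →
      |B m m'| ≤ M := by
    intro m m' hm hm'
    exact aux_abs_integral_le m _ M (fun z => aux_abs_integral_le m' _ M (fun z' => hM z z'))
  -- the key finite-n inequality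
  have key : ∀ n : ℕ, 0 < n →
      B p q + B q p ≤ B p p + B q q + 4 * M / n := by
    intro n hn
    set P : Fin n ⊕ Fin n → Measure Z := Sum.elim (fun _ => p) (fun _ => q) with hP
    have hPprob : ∀ i, IsProbabilityMeasure (P i) := by
      rintro (i | i) <;> simpa [hP]
    set a : Fin n ⊕ Fin n → ℝ := Sum.elim (fun _ => 1) (fun _ => -1) with ha
    set Ω : Measure (Fin n ⊕ Fin n → Z) := Measure.pi P with hΩ
    have hΩprob : IsProbabilityMeasure Ω := by
      constructor
      rw [hΩ, Measure.pi_univ]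
      simp [(hPprob _).measure_univ]
    have hmeaspair : ∀ i j : Fin n ⊕ Fin n, Measurable (fun ω : Fin n ⊕ Fin n → Z => (ω i, ω j)) :=
      fun i j => (measurable_pi_apply i).prodMk (measurable_pi_apply j)
    have hintpair : ∀ i j : Fin n ⊕ Fin n,
        Integrable (fun ω : Fin n ⊕ Fin n → Z => c (ω i) (ω j)) Ω := by
      intro i j
      refine aux_integrable_of_bound Ω _ ?_ M (fun ω => hM _ _)
      exact (hsm.comp_measurable (hmeaspair i j)).aestronglyMeasurable
    set T : Fin n ⊕ Fin n → Fin n ⊕ Fin n → ℝ :=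
      fun i j => ∫ ω, c (ω i) (ω j) ∂Ω with hT
    have hTabs : ∀ i j, |T i j| ≤ M := fun i j =>
      aux_abs_integral_le Ω _ M (fun ω => hM _ _)
    have hTB : ∀ i j : Fin n ⊕ Fin n, i ≠ j → T i j = B (P i) (P j) := by
      intro i j hij
      have h1 : T i j = ∫ zz, Function.uncurry c zz ∂((P i).prod (P j)) := by
        rw [hT]
        rw [← aux_map_eval_pair P hij,
          integral_map (hmeaspair i j).aemeasurable hsm.aestronglyMeasurable]
        rfl
      rw [h1]
      have hint : Integrable (Function.uncurry c) ((P i).prod (P j)) := by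
        haveI := hPprob i; haveI := hPprob j
        exact aux_integrable_of_bound _ _ hsm.aestronglyMeasurable M (fun z => hM z.1 z.2)
      haveI := hPprob j
      rw [integral_prod _ hint]
      rfl
    have hgpos : 0 ≤ ∫ ω, (∑ i : Fin n ⊕ Fin n, ∑ j : Fin n ⊕ Fin n,
        a i * a j * c (ω i) (ω j)) ∂Ω :=
      integral_nonneg (fun ω => hpos (Fin n ⊕ Fin n) (fun i => ω i) a)
    have hsum : ∫ ω, (∑ i : Fin n ⊕ Fin n, ∑ j : Fin n ⊕ Fin n,
        a i * a j * c (ω i) (ω j)) ∂Ω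
        = ∑ i : Fin n ⊕ Fin n, ∑ j : Fin n ⊕ Fin n, a i * a j * T i j := by
      rw [integral_finset_sum _ (fun i _ => integrable_finset_sum _
        (fun j _ => ((hintpair i j).const_mul _)))]
      refine Finset.sum_congr rfl fun i _ => ?_
      rw [integral_finset_sum _ (fun j _ => ((hintpair i j).const_mul _))]
      refine Finset.sum_congr rfl fun j _ => ?_
      rw [integral_const_mul]
    have hS : 0 ≤ ∑ i : Fin n ⊕ Fin n, ∑ j : Fin n ⊕ Fin n, a i * a j * T i j := hsum ▸ hgpos
    have hdiff : (∑ i : Fin n ⊕ Fin n, ∑ j : Fin n ⊕ Fin n, a i * a j * T i j)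
        - (∑ i : Fin n ⊕ Fin n, ∑ j : Fin n ⊕ Fin n, a i * a j * B (P i) (P j))
        = ∑ i : Fin n ⊕ Fin n, a i * a i * (T i i - B (P i) (P i)) := by
      rw [← Finset.sum_sub_distrib]
      refine Finset.sum_congr rfl fun i _ => ?_
      rw [← Finset.sum_sub_distrib]
      rw [Finset.sum_eq_single_of_mem i (Finset.mem_univ i)]
      · ring
      · intro j _ hji
        rw [hTB i j (fun h => hji (h.symm))]
        ring
    have hcard : (Finset.univ : Finset (Fin n ⊕ Fin n)).card = 2 * n := by
      simp [Finset.card_univ, Fintype.card_sum]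
      ring
    have hdiffbound : ∑ i : Fin n ⊕ Fin n, a i * a i * (T i i - B (P i) (P i))
        ≤ (2 * n : ℕ) * (2 * M) := by
      have hterm : ∀ i : Fin n ⊕ Fin n, a i * a i * (T i i - B (P i) (P i)) ≤ 2 * M := by
        intro i
        have h1 : a i * a i = 1 := by rcases i with i | i <;> simp [ha]
        rw [h1, one_mul]
        have h2 := hTabs i i
        have h3 := hBabs (P i) (P i) (hPprob i) (hPprob i)
        cases' abs_le.1 h2 with h2a h2b
        cases' abs_le.1 h3 with h3a h3b
        linarith
      calc ∑ i : Fin n ⊕ Fin n, a i * a i * (T i i - B (P i) (P i))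
          ≤ ∑ _i : Fin n ⊕ Fin n, 2 * M := Finset.sum_le_sum fun i _ => hterm i
        _ = (2 * n : ℕ) * (2 * M) := by
            rw [Finset.sum_const, hcard, nsmul_eq_mul]
    have hBsum : (∑ i : Fin n ⊕ Fin n, ∑ j : Fin n ⊕ Fin n, a i * a j * B (P i) (P j))
        = (n : ℝ) ^ 2 * (B p p + B q q - B p q - B q p) := by
      simp only [Fintype.sum_sum_type, hP, ha, Sum.elim_inl, Sum.elim_inr,
        Finset.sum_const, Finset.card_univ, Fintype.card_fin, nsmul_eq_mul]
      ring
    have hnpos : (0 : ℝ) < n := by exact_mod_cast hn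
    have hfinal : 0 ≤ (n : ℝ) ^ 2 * (B p p + B q q - B p q - B q p)
        + (2 * (n:ℝ)) * (2 * M) := by
      have h9 : ((2 * n : ℕ) : ℝ) = 2 * (n : ℝ) := by push_cast; ring
      rw [h9] at hdiffbound
      linarith [hS, hdiff, hdiffbound, hBsum]
    have hX : 0 ≤ (n : ℝ) * (B p p + B q q - B p q - B q p) + 4 * M := by
      have h9 : 0 ≤ (n : ℝ) * ((n : ℝ) * (B p p + B q q - B p q - B q p) + 4 * M) := by
        nlinarith [hfinal]
      nlinarith [h9, hnpos]
    have h10 : B p q + B q p - (B p p + B q q) ≤ 4 * M / n := by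
      rw [le_div_iff₀ hnpos]
      nlinarith [hX]
    linarith
  -- take the limit n → ∞
  have hlim : Tendsto (fun n : ℕ => B p p + B q q + 4 * M / n) atTop
      (𝓝 (B p p + B q q + 0)) := by
    exact tendsto_const_nhds.add (tendsto_const_div_atTop_nhds_zero_nat (4 * M))
  rw [add_zero] at hlim
  refine ge_of_tendsto hlim ?_
  filter_upwards [eventually_gt_atTop 0] with n hn
  exact key n hn

noncomputable section

/-- `π` is a coupling of `μ` and `ν`, i.e. an element of `Π(μ,ν)`. -/
def IsCouplingOf {X Y : Type*} [MeasurableSpace X] [MeasurableSpace Y]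
    (π : Measure (X × Y)) (μ : Measure X) (ν : Measure Y) : Prop :=
  π.map Prod.fst = μ ∧ π.map Prod.snd = ν

/-- The quadratic-form transport cost `∬ c dπ ⊗ dπ`. -/
def qotCost {X Y : Type*} [MeasurableSpace X] [MeasurableSpace Y]
    (c : X × Y → X × Y → ℝ) (π : Measure (X × Y)) : ℝ :=
  ∫ z, (∫ z', c z z' ∂π) ∂π

/-- `π` is a minimizer of the QOT problem with cost `c` and marginals `μ, ν`. -/
def IsQOTMinimizer {X Y : Type*} [MeasurableSpace X] [MeasurableSpace Y]
    (c : X × Y → X × Y → ℝ) (μ : Measure X) (ν : Measure Y)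
    (π : Measure (X × Y)) : Prop :=
  IsProbabilityMeasure π ∧ IsCouplingOf π μ ν ∧
    ∀ π' : Measure (X × Y), IsProbabilityMeasure π' → IsCouplingOf π' μ ν →
      qotCost c π ≤ qotCost c π'

/-- `π` is a maximizer of the QOT problem with cost `c` and marginals `μ, ν`. -/
def IsQOTMaximizer {X Y : Type*} [MeasurableSpace X] [MeasurableSpace Y]
    (c : X × Y → X × Y → ℝ) (μ : Measure X) (ν : Measure Y)
    (π : Measure (X × Y)) : Prop :=
  IsProbabilityMeasure π ∧ IsCouplingOf π μ ν ∧
    ∀ π' : Measure (X × Y), IsProbabilityMeasure π' → IsCouplingOf π' μ ν →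
      qotCost c π' ≤ qotCost c π

/-- Proposition: convexity of QOT.
If the cost function `c` is bounded, continuous, symmetric, and positive definite,
then the quadratic-form transport cost is a convex function of `π` on `Π(μ,ν)`. -/
theorem qot_convex_of_positive_definite
    {X Y : Type*} [MeasurableSpace X] [TopologicalSpace X] [PolishSpace X] [BorelSpace X]
    [MeasurableSpace Y] [TopologicalSpace Y] [PolishSpace Y] [BorelSpace Y]
    (μ : Measure X) (ν : Measure Y) [IsProbabilityMeasure μ] [IsProbabilityMeasure ν]
    (c : X × Y → X × Y → ℝ)
    (hbdd : ∃ M : ℝ, ∀ z z' : X × Y, |c z z'| ≤ M)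
    (hcont : Continuous (Function.uncurry c))
    (hsymm : ∀ z z' : X × Y, c z z' = c z' z)
    (hposdef : ∀ (n : ℕ) (s : Fin n → X × Y) (a : Fin n → ℝ),
      0 ≤ ∑ i : Fin n, ∑ j : Fin n, a i * a j * c (s i) (s j)) :
    ∀ π₀ π₁ : Measure (X × Y),
      IsProbabilityMeasure π₀ → IsProbabilityMeasure π₁ →
      IsCouplingOf π₀ μ ν → IsCouplingOf π₁ μ ν →
      ∀ t ∈ Icc (0:ℝ) 1,
        qotCost c (ENNReal.ofReal t • π₀ + ENNReal.ofReal (1 - t) • π₁) ≤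
          t * qotCost c π₀ + (1 - t) * qotCost c π₁ := by
  intro π₀ π₁ h0 h1 _ _ t ht
  obtain ⟨ht0, ht1⟩ := ht
  obtain ⟨M, hM⟩ := hbdd
  haveI := h0; haveI := h1
  have h1t : (0:ℝ) ≤ 1 - t := by linarith
  have hsm : StronglyMeasurable (Function.uncurry c) := hcont.stronglyMeasurable
  have hpos' := aux_posdef_fintype c hposdef
  have henergy := aux_energy c M hM hcont hpos' π₀ π₁
  -- basic integrability facts
  have hc_int : ∀ (z : X × Y) (m : Measure (X × Y)), IsProbabilityMeasure m →
      Integrable (fun z' => c z z') m := by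
    intro z m hm
    exact aux_integrable_of_bound m _
      ((hcont.comp (Continuous.prodMk_right z)).aestronglyMeasurable) M (hM z)
  have hFsm : ∀ (m : Measure (X × Y)), SigmaFinite m →
      StronglyMeasurable (fun z => ∫ z', c z z' ∂m) := by
    intro m hm
    exact hsm.integral_prod_right'
  have hFb : ∀ (m : Measure (X × Y)), IsProbabilityMeasure m →
      ∀ z, |∫ z', c z z' ∂m| ≤ M := by
    intro m hm z
    exact aux_abs_integral_le m _ M (hM z)
  have hFint : ∀ (m m' : Measure (X × Y)), IsProbabilityMeasure m → IsProbabilityMeasure m' →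
      Integrable (fun z => ∫ z', c z z' ∂m) m' := by
    intro m m' hm hm'
    haveI := hm; haveI := hm'
    exact aux_integrable_of_bound m' _ (hFsm m inferInstance).aestronglyMeasurable M (hFb m hm)
  set πt := ENNReal.ofReal t • π₀ + ENNReal.ofReal (1 - t) • π₁ with hπt
  -- integrals against the mixture
  have hmixI : ∀ (f : X × Y → ℝ), Integrable f π₀ → Integrable f π₁ →
      ∫ z, f z ∂πt = t * ∫ z, f z ∂π₀ + (1 - t) * ∫ z, f z ∂π₁ := by
    intro f hf0 hf1
    rw [hπt, integral_add_measure (hf0.smul_measure ENNReal.ofReal_ne_top)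
      (hf1.smul_measure ENNReal.ofReal_ne_top), integral_smul_measure, integral_smul_measure,
      ENNReal.toReal_ofReal ht0, ENNReal.toReal_ofReal h1t, smul_eq_mul, smul_eq_mul]
  have hinner : ∀ z, (∫ z', c z z' ∂πt)
      = t * (∫ z', c z z' ∂π₀) + (1 - t) * (∫ z', c z z' ∂π₁) := by
    intro z
    exact hmixI _ (hc_int z π₀ h0) (hc_int z π₁ h1)
  -- expand the quadratic cost of the mixture
  have hG0 : Integrable (fun z => t * (∫ z', c z z' ∂π₀) + (1 - t) * (∫ z', c z z' ∂π₁)) π₀ :=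
    ((hFint π₀ π₀ h0 h0).const_mul t).add ((hFint π₁ π₀ h1 h0).const_mul (1 - t))
  have hG1 : Integrable (fun z => t * (∫ z', c z z' ∂π₀) + (1 - t) * (∫ z', c z z' ∂π₁)) π₁ :=
    ((hFint π₀ π₁ h0 h1).const_mul t).add ((hFint π₁ π₁ h1 h1).const_mul (1 - t))
  have hqot : qotCost c πt
      = t * (t * (∫ z, ∫ z', c z z' ∂π₀ ∂π₀) + (1 - t) * (∫ z, ∫ z', c z z' ∂π₁ ∂π₀))
      + (1 - t) * (t * (∫ z, ∫ z', c z z' ∂π₀ ∂π₁) + (1 - t) * (∫ z, ∫ z', c z z' ∂π₁ ∂π₁)) := by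
    have e1 : qotCost c πt
        = ∫ z, (t * (∫ z', c z z' ∂π₀) + (1 - t) * (∫ z', c z z' ∂π₁)) ∂πt := by
      unfold qotCost
      exact integral_congr_ae (ae_of_all _ hinner)
    rw [e1, hmixI _ hG0 hG1,
      integral_add ((hFint π₀ π₀ h0 h0).const_mul t) ((hFint π₁ π₀ h1 h0).const_mul (1 - t)),
      integral_add ((hFint π₀ π₁ h0 h1).const_mul t) ((hFint π₁ π₁ h1 h1).const_mul (1 - t)),
      integral_const_mul, integral_const_mul, integral_const_mul, integral_const_mul]
  rw [hqot]
  have hq0 : qotCost c π₀ = ∫ z, ∫ z', c z z' ∂π₀ ∂π₀ := rfl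
  have hq1 : qotCost c π₁ = ∫ z, ∫ z', c z z' ∂π₁ ∂π₁ := rfl
  rw [hq0, hq1]
  nlinarith [henergy, mul_nonneg (mul_nonneg ht0 h1t)
    (sub_nonneg.2 henergy), sq_nonneg t]
end
end

section
/- Suppose μ, ν are compactly supported probability measures on ℝ and the cost function is c(x,y,x',y') = f(x,y) g(x',y') where f and g are quadratic polynomials in two variables. Then there exists λ ∈ [0,1] such that π_x^λ = λ π_com + (1−λ) π_ant is a minimizer of the quadratic-form transport cost over Π(μ,ν). Moreover, if μ and ν are not degenerate (not point masses), then for every λ ∈ [0,1] there exist quadratic polynomials f, g such that π_x^λ minimizes the quadratic-form transport cost with cost f(x,y)g(x',y') uniquely among the family (π_x^λ)_{λ∈[0,1]}. -/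
open MeasureTheory Set Filter Topology

noncomputable section

/-- The left quantile function of a measure on `ℝ`. -/
def qtl (μ : Measure ℝ) (t : ℝ) : ℝ :=
  sInf {x : ℝ | ENNReal.ofReal t ≤ μ (Iic x)}

/-- The uniform distribution on `[0,1]`. -/
def unif01 : Measure ℝ := volume.restrict (Icc 0 1)

/-- The comonotone coupling of `μ` and `ν`. -/
def pCom (μ ν : Measure ℝ) : Measure (ℝ × ℝ) :=
  unif01.map fun u => (qtl μ u, qtl ν u)

/-- The antimonotone coupling of `μ` and `ν`. -/
def pAnt (μ ν : Measure ℝ) : Measure (ℝ × ℝ) :=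
  unif01.map fun u => (qtl μ u, qtl ν (1 - u))

/-- The mixture `π_x^λ = λ π_com + (1-λ) π_ant` (an X-transport for `λ ∈ (0,1)`). -/
def pXmix (μ ν : Measure ℝ) (l : ℝ) : Measure (ℝ × ℝ) :=
  ENNReal.ofReal l • pCom μ ν + ENNReal.ofReal (1 - l) • pAnt μ ν

/-- A quadratic polynomial in two real variables. -/
def IsQuadratic2 (f : ℝ → ℝ → ℝ) : Prop :=
  ∃ a b c d e k : ℝ, ∀ x y : ℝ,
    f x y = a + b * x + c * y + d * x ^ 2 + e * y ^ 2 + k * x * y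

/-!
For a coupling `π` of `μ` and `ν`, the cost `∬ f(x,y) g(x',y') dπ dπ` factors as
`(∫ f dπ) (∫ g dπ)`, and since the marginals are fixed, each factor is an affine function of the
mixed moment `∫ x y dπ`; so the cost is a continuous function of this single number.
Hoeffding's identity `∫ (x - m) (y - m) dπ = ∬_{s, t > m} π(X > s, Y > t) ds dt`, together with
the Fréchet–Hoeffding bounds `(1 - F(s) - G(t))⁺ ≤ π(X > s, Y > t) ≤ 1 - max (F(s), G(t))`,
attained by `π_ant` and `π_com`, shows that the mixed moment of every coupling lies between
those of `π_ant` and `π_com`, say `A ≤ B`. The mixtures `π_x^λ` sweep out `[A, B]`, so one of them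
is optimal. If neither marginal is a point mass, the Fréchet–Hoeffding gap is positive on a
rectangle of positive area, so `A < B`; then for the cost `(xy - c) ⊗ (xy - c)`, with `c` the
mixed moment of `π_x^λ`, the cost of `π_x^λ'` is `((λ' - λ) (B - A))²`, minimal exactly at
`λ' = λ`.
-/

open ProbabilityTheory

lemma unif01_eq_restrict_Ioo : unif01 = volume.restrict (Ioo 0 1) :=
  (Measure.restrict_congr_set Ioo_ae_eq_Icc).symm

instance : IsProbabilityMeasure unif01 :=
  ⟨by simp [unif01, Real.volume_Icc]⟩

lemma unif01_map_one_sub : unif01.map (fun u => 1 - u) = unif01 := by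
  have h := (Measure.measurePreserving_sub_left volume (1 : ℝ)).restrict_preimage
    (measurableSet_Icc (a := (0 : ℝ)) (b := 1))
  have hpre : (fun u : ℝ => 1 - u) ⁻¹' Icc 0 1 = Icc 0 1 := by
    ext u; simp only [mem_preimage, mem_Icc]; constructor <;> intro h <;> constructor <;> linarith
  rw [hpre] at h
  exact h.map_eq

section Quantile

variable {μ : Measure ℝ} [IsProbabilityMeasure μ] {t x : ℝ}

lemma qtl_le_iff_le_cdf (ht : t ∈ Ioo 0 1) : qtl μ t ≤ x ↔ t ≤ cdf μ x := by
  have hset : {y | ENNReal.ofReal t ≤ μ (Iic y)} = {y | t ≤ cdf μ y} := by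
    ext y; simp [← ofReal_cdf, ENNReal.ofReal_le_ofReal_iff (cdf_nonneg μ y)]
  have hne : {y | t ≤ cdf μ y}.Nonempty :=
    ((tendsto_cdf_atTop μ).eventually (eventually_ge_nhds ht.2)).exists.imp fun _ h => h
  have hbdd : BddBelow {y | t ≤ cdf μ y} := by
    obtain ⟨y₀, hy₀⟩ :=
      ((tendsto_cdf_atBot μ).eventually (eventually_lt_nhds ht.1)).exists_forall_of_atBot
    exact ⟨y₀, fun y hy => le_of_not_gt fun hlt => (hy₀ y hlt.le).not_ge hy⟩
  rw [qtl, hset]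
  refine ⟨fun h => ?_, fun h => csInf_le hbdd h⟩
  -- right continuity of the cdf makes the infimum attained
  refine ge_of_tendsto ((cdf μ).right_continuous x |>.mono Ioi_subset_Ici_self)
    (eventually_nhdsWithin_of_forall fun y (hy : x < y) => ?_)
  obtain ⟨z, hz, hzy⟩ := (csInf_lt_iff hbdd hne).1 (h.trans_lt hy)
  exact hz.trans (monotone_cdf μ hzy.le)

lemma lt_qtl_iff_cdf_lt (ht : t ∈ Ioo 0 1) : x < qtl μ t ↔ cdf μ x < t :=
  lt_iff_lt_of_le_iff_le (qtl_le_iff_le_cdf ht)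

lemma monotoneOn_qtl : MonotoneOn (qtl μ) (Ioo 0 1) := fun _ ha _ hb hab =>
  (qtl_le_iff_le_cdf ha).2 (hab.trans ((qtl_le_iff_le_cdf hb).1 le_rfl))

lemma aemeasurable_qtl : AEMeasurable (qtl μ) unif01 := by
  rw [unif01_eq_restrict_Ioo]
  exact aemeasurable_restrict_of_monotoneOn measurableSet_Ioo monotoneOn_qtl

lemma unif01_map_qtl : unif01.map (qtl μ) = μ := by
  refine Measure.ext_of_Iic _ _ fun x => ?_
  have hset : qtl μ ⁻¹' Iic x ∩ Ioo 0 1 = Ioc 0 (cdf μ x) ∩ Ioo 0 1 := by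
    ext u
    simp only [mem_inter_iff, mem_preimage, mem_Iic, mem_Ioc]
    constructor
    · rintro ⟨h, hu⟩; exact ⟨⟨hu.1, (qtl_le_iff_le_cdf hu).1 h⟩, hu⟩
    · rintro ⟨h, hu⟩; exact ⟨(qtl_le_iff_le_cdf hu).2 h.2, hu⟩
  rw [Measure.map_apply_of_aemeasurable aemeasurable_qtl measurableSet_Iic, unif01_eq_restrict_Ioo,
    Measure.restrict_apply' measurableSet_Ioo, hset, ← Measure.restrict_apply' measurableSet_Ioo,
    ← unif01_eq_restrict_Ioo, unif01, Measure.restrict_apply measurableSet_Ioc,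
    inter_eq_left.2 (Ioc_subset_Icc_self.trans (Icc_subset_Icc_right (cdf_le_one μ x))),
    Real.volume_Ioc, sub_zero, ofReal_cdf]

end Quantile

namespace IsCouplingOf

variable {μ ν : Measure ℝ} {π : Measure (ℝ × ℝ)}

lemma measure_prod_univ (hπ : IsCouplingOf π μ ν) {A : Set ℝ} (hA : MeasurableSet A) :
    π (A ×ˢ univ) = μ A := by
  rw [← hπ.1, Measure.map_apply measurable_fst hA, prod_univ]

lemma measure_univ_prod (hπ : IsCouplingOf π μ ν) {B : Set ℝ} (hB : MeasurableSet B) :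
    π (univ ×ˢ B) = ν B := by
  rw [← hπ.2, Measure.map_apply measurable_snd hB, univ_prod]

end IsCouplingOf

section Couplings

variable {μ ν : Measure ℝ} [IsProbabilityMeasure μ] [IsProbabilityMeasure ν]

lemma measure_Ioi_eq_ofReal_one_sub_cdf (x : ℝ) : μ (Ioi x) = ENNReal.ofReal (1 - cdf μ x) := by
  rw [← compl_Iic, prob_compl_eq_one_sub measurableSet_Iic, ← ofReal_cdf, ← ENNReal.ofReal_one,
    ENNReal.ofReal_sub _ (cdf_nonneg μ x)]

lemma unif01_map_qtl_one_sub : unif01.map (fun u => qtl μ (1 - u)) = μ := by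
  have h := aemeasurable_qtl (μ := μ)
  rw [← unif01_map_one_sub] at h
  calc unif01.map (fun u => qtl μ (1 - u))
      = (unif01.map fun u => 1 - u).map (qtl μ) :=
        (h.map_map_of_aemeasurable (measurable_const.sub measurable_id).aemeasurable).symm
    _ = μ := by rw [unif01_map_one_sub, unif01_map_qtl]

lemma aemeasurable_qtl_one_sub : AEMeasurable (fun u => qtl μ (1 - u)) unif01 := by
  have h := aemeasurable_qtl (μ := μ)
  rw [← unif01_map_one_sub] at h
  exact h.comp_measurable (measurable_const.sub measurable_id)

instance : IsProbabilityMeasure (pCom μ ν) :=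
  Measure.isProbabilityMeasure_map (μ := unif01) (aemeasurable_qtl.prodMk aemeasurable_qtl)

instance : IsProbabilityMeasure (pAnt μ ν) :=
  Measure.isProbabilityMeasure_map (μ := unif01)
    (aemeasurable_qtl.prodMk aemeasurable_qtl_one_sub)

lemma isCouplingOf_pCom : IsCouplingOf (pCom μ ν) μ ν := by
  have h := (aemeasurable_qtl (μ := μ)).prodMk (aemeasurable_qtl (μ := ν))
  exact ⟨(measurable_fst.aemeasurable.map_map_of_aemeasurable h).trans unif01_map_qtl,
    (measurable_snd.aemeasurable.map_map_of_aemeasurable h).trans unif01_map_qtl⟩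

lemma isCouplingOf_pAnt : IsCouplingOf (pAnt μ ν) μ ν := by
  have h := (aemeasurable_qtl (μ := μ)).prodMk (aemeasurable_qtl_one_sub (μ := ν))
  exact ⟨(measurable_fst.aemeasurable.map_map_of_aemeasurable h).trans unif01_map_qtl,
    (measurable_snd.aemeasurable.map_map_of_aemeasurable h).trans unif01_map_qtl_one_sub⟩

lemma pCom_Ioi_prod_Ioi (s t : ℝ) :
    pCom μ ν (Ioi s ×ˢ Ioi t) = ENNReal.ofReal (1 - max (cdf μ s) (cdf ν t)) := by
  have hset : (fun u => (qtl μ u, qtl ν u)) ⁻¹' (Ioi s ×ˢ Ioi t) ∩ Ioo 0 1 =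
      Ioo (max (cdf μ s) (cdf ν t)) 1 := by
    ext u
    simp only [mem_inter_iff, mem_preimage, mem_prod, mem_Ioi, mem_Ioo, max_lt_iff]
    constructor
    · rintro ⟨⟨h₁, h₂⟩, hu⟩
      exact ⟨⟨(lt_qtl_iff_cdf_lt hu).1 h₁, (lt_qtl_iff_cdf_lt hu).1 h₂⟩, hu.2⟩
    · rintro ⟨⟨h₁, h₂⟩, hu₁⟩
      have hu : u ∈ Ioo 0 1 := ⟨(cdf_nonneg μ s).trans_lt h₁, hu₁⟩
      exact ⟨⟨(lt_qtl_iff_cdf_lt hu).2 h₁, (lt_qtl_iff_cdf_lt hu).2 h₂⟩, hu⟩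
  rw [pCom, Measure.map_apply_of_aemeasurable (aemeasurable_qtl.prodMk aemeasurable_qtl)
      (measurableSet_Ioi.prod measurableSet_Ioi), unif01_eq_restrict_Ioo,
    Measure.restrict_apply' measurableSet_Ioo, hset, Real.volume_Ioo]

lemma pAnt_Ioi_prod_Ioi (s t : ℝ) :
    pAnt μ ν (Ioi s ×ˢ Ioi t) = ENNReal.ofReal (1 - cdf μ s - cdf ν t) := by
  have hset : (fun u => (qtl μ u, qtl ν (1 - u))) ⁻¹' (Ioi s ×ˢ Ioi t) ∩ Ioo 0 1 =
      Ioo (cdf μ s) (1 - cdf ν t) := by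
    ext u
    simp only [mem_inter_iff, mem_preimage, mem_prod, mem_Ioi, mem_Ioo]
    constructor
    · rintro ⟨⟨h₁, h₂⟩, hu⟩
      have hu' : 1 - u ∈ Ioo 0 1 := ⟨by linarith [hu.2], by linarith [hu.1]⟩
      exact ⟨(lt_qtl_iff_cdf_lt hu).1 h₁, by linarith [(lt_qtl_iff_cdf_lt hu').1 h₂]⟩
    · rintro ⟨h₁, h₂⟩
      have hu : u ∈ Ioo 0 1 := ⟨(cdf_nonneg μ s).trans_lt h₁, by linarith [cdf_nonneg ν t]⟩
      have hu' : 1 - u ∈ Ioo 0 1 := ⟨by linarith [hu.2], by linarith [hu.1]⟩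
      exact ⟨⟨(lt_qtl_iff_cdf_lt hu).2 h₁, (lt_qtl_iff_cdf_lt hu').2 (by linarith)⟩, hu⟩
  rw [pAnt, Measure.map_apply_of_aemeasurable (aemeasurable_qtl.prodMk aemeasurable_qtl_one_sub)
      (measurableSet_Ioi.prod measurableSet_Ioi), unif01_eq_restrict_Ioo,
    Measure.restrict_apply' measurableSet_Ioo, hset, Real.volume_Ioo, sub_right_comm]

namespace IsCouplingOf

variable {π : Measure (ℝ × ℝ)}

lemma measure_Ioi_prod_Ioi_le_pCom (hπ : IsCouplingOf π μ ν) (s t : ℝ) :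
    π (Ioi s ×ˢ Ioi t) ≤ pCom μ ν (Ioi s ×ˢ Ioi t) := by
  rw [pCom_Ioi_prod_Ioi, sub_sup, ENNReal.ofReal_min, ← measure_Ioi_eq_ofReal_one_sub_cdf,
    ← measure_Ioi_eq_ofReal_one_sub_cdf, ← hπ.measure_prod_univ measurableSet_Ioi,
    ← hπ.measure_univ_prod measurableSet_Ioi]
  exact le_min (measure_mono (prod_mono_right (subset_univ _)))
    (measure_mono (prod_mono_left (subset_univ _)))

lemma pAnt_le_measure_Ioi_prod_Ioi (hπ : IsCouplingOf π μ ν) (s t : ℝ) :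
    pAnt μ ν (Ioi s ×ˢ Ioi t) ≤ π (Ioi s ×ˢ Ioi t) := by
  have hcover : μ (Ioi s) ≤ π (Ioi s ×ˢ Ioi t) + ν (Iic t) := by
    rw [← hπ.measure_prod_univ measurableSet_Ioi, ← hπ.measure_univ_prod measurableSet_Iic]
    refine (measure_mono fun z hz => ?_).trans (measure_union_le _ _)
    rcases lt_or_ge t z.2 with h | h
    exacts [Or.inl ⟨hz.1, h⟩, Or.inr ⟨mem_univ _, h⟩]
  rw [pAnt_Ioi_prod_Ioi, ENNReal.ofReal_sub _ (cdf_nonneg ν t), ofReal_cdf,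
    ← measure_Ioi_eq_ofReal_one_sub_cdf]
  exact tsub_le_iff_right.2 hcover

end IsCouplingOf

end Couplings

lemma lintegral_ofReal_sub_mul_ofReal_sub (π : Measure (ℝ × ℝ)) [SFinite π] (a b : ℝ) :
    ∫⁻ z, ENNReal.ofReal (z.1 - a) * ENNReal.ofReal (z.2 - b) ∂π =
      ∫⁻ p, π (Ioi p.1 ×ˢ Ioi p.2) ∂(volume.restrict (Ioi a)).prod (volume.restrict (Ioi b)) := by
  set ρ := (volume.restrict (Ioi a)).prod (volume.restrict (Ioi b))
  set U := {w : (ℝ × ℝ) × (ℝ × ℝ) | w.2.1 < w.1.1 ∧ w.2.2 < w.1.2}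
  have hU : MeasurableSet U := by
    simp only [U, ofPred_and]
    exact (measurableSet_lt (by fun_prop) (by fun_prop)).inter
      (measurableSet_lt (by fun_prop) (by fun_prop))
  have hρ (z : ℝ × ℝ) :
      ENNReal.ofReal (z.1 - a) * ENNReal.ofReal (z.2 - b) = ρ (Iio z.1 ×ˢ Iio z.2) := by
    rw [Measure.prod_prod, Measure.restrict_apply measurableSet_Iio,
      Measure.restrict_apply measurableSet_Iio, Iio_inter_Ioi, Iio_inter_Ioi, Real.volume_Ioo,
      Real.volume_Ioo]
  calc ∫⁻ z, ENNReal.ofReal (z.1 - a) * ENNReal.ofReal (z.2 - b) ∂π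
      = π.prod ρ U := by simp_rw [hρ]; exact (Measure.prod_apply hU).symm
    _ = ∫⁻ p, π (Ioi p.1 ×ˢ Ioi p.2) ∂ρ := Measure.prod_apply_symm hU

section CompactSupport

variable {μ ν : Measure ℝ} {π : Measure (ℝ × ℝ)} {m M : ℝ}

namespace IsCouplingOf

lemma ae_mem_Icc_prod (hπ : IsCouplingOf π μ ν) (hμ : μ (Icc m M)ᶜ = 0)
    (hν : ν (Icc m M)ᶜ = 0) : ∀ᵐ z ∂π, z ∈ Icc m M ×ˢ Icc m M := by
  refine ae_iff.2 ?_
  change π (Icc m M ×ˢ Icc m M)ᶜ = 0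
  rw [compl_prod_eq_union]
  exact measure_union_null ((hπ.measure_prod_univ measurableSet_Icc.compl).trans hμ)
    ((hπ.measure_univ_prod measurableSet_Icc.compl).trans hν)

lemma integrable_of_continuous [IsFiniteMeasure π] (hπ : IsCouplingOf π μ ν)
    (hμ : μ (Icc m M)ᶜ = 0) (hν : ν (Icc m M)ᶜ = 0) {f : ℝ × ℝ → ℝ} (hf : Continuous f) :
    Integrable f π := by
  have h : IntegrableOn f (Icc m M ×ˢ Icc m M) π :=
    hf.continuousOn.integrableOn_compact (isCompact_Icc.prod isCompact_Icc)
  rwa [IntegrableOn, Measure.restrict_eq_self_of_ae_mem (hπ.ae_mem_Icc_prod hμ hν)] at h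

lemma integral_comp_fst (hπ : IsCouplingOf π μ ν) {φ : ℝ → ℝ} (hφ : AEStronglyMeasurable φ μ) :
    ∫ z, φ z.1 ∂π = ∫ x, φ x ∂μ := by
  rw [← hπ.1] at hφ ⊢
  exact (integral_map measurable_fst.aemeasurable hφ).symm

lemma integral_comp_snd (hπ : IsCouplingOf π μ ν) {φ : ℝ → ℝ} (hφ : AEStronglyMeasurable φ ν) :
    ∫ z, φ z.2 ∂π = ∫ y, φ y ∂ν := by
  rw [← hπ.2] at hφ ⊢
  exact (integral_map measurable_snd.aemeasurable hφ).symm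

lemma integral_quadratic [IsProbabilityMeasure π] (hπ : IsCouplingOf π μ ν)
    (hμ : μ (Icc m M)ᶜ = 0) (hν : ν (Icc m M)ᶜ = 0) (a b c d e k : ℝ) :
    ∫ z, (a + b * z.1 + c * z.2 + d * z.1 ^ 2 + e * z.2 ^ 2 + k * z.1 * z.2) ∂π =
      a + b * (∫ x, x ∂μ) + c * (∫ y, y ∂ν) + d * (∫ x, x ^ 2 ∂μ) + e * (∫ y, y ^ 2 ∂ν) +
        k * ∫ z, z.1 * z.2 ∂π := by
  have hint {f : ℝ × ℝ → ℝ} (hf : Continuous f) : Integrable f π :=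
    hπ.integrable_of_continuous hμ hν hf
  simp_rw [mul_assoc k]
  rw [integral_add (hint (by fun_prop)) (hint (by fun_prop)),
    integral_add (hint (by fun_prop)) (hint (by fun_prop)),
    integral_add (hint (by fun_prop)) (hint (by fun_prop)),
    integral_add (hint (by fun_prop)) (hint (by fun_prop)),
    integral_add (hint (by fun_prop)) (hint (by fun_prop))]
  have hx : ∫ z, z.1 ∂π = ∫ x, x ∂μ := hπ.integral_comp_fst aestronglyMeasurable_id
  have hy : ∫ z, z.2 ∂π = ∫ y, y ∂ν := hπ.integral_comp_snd aestronglyMeasurable_id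
  simp only [integral_const_mul, integral_const, probReal_univ, smul_eq_mul, one_mul, hx, hy,
    hπ.integral_comp_fst (continuous_pow 2).aestronglyMeasurable,
    hπ.integral_comp_snd (continuous_pow 2).aestronglyMeasurable]

lemma integral_sub_mul_sub [IsProbabilityMeasure π] (hπ : IsCouplingOf π μ ν)
    (hμ : μ (Icc m M)ᶜ = 0) (hν : ν (Icc m M)ᶜ = 0) :
    ∫ z, (z.1 - m) * (z.2 - m) ∂π =
      ∫ z, z.1 * z.2 ∂π - m * (∫ x, x ∂μ) - m * (∫ y, y ∂ν) + m ^ 2 := by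
  have h := hπ.integral_quadratic hμ hν (m ^ 2) (-m) (-m) 0 0 1
  simp only [zero_mul, add_zero, one_mul] at h
  rw [show (fun z : ℝ × ℝ => (z.1 - m) * (z.2 - m)) =
      fun z => m ^ 2 + -m * z.1 + -m * z.2 + z.1 * z.2 from funext fun z => by ring, h]
  ring

lemma ofReal_integral_sub_mul_sub_eq_lintegral [IsProbabilityMeasure π] (hπ : IsCouplingOf π μ ν)
    (hμ : μ (Icc m M)ᶜ = 0) (hν : ν (Icc m M)ᶜ = 0) :
    ENNReal.ofReal (∫ z, (z.1 - m) * (z.2 - m) ∂π) =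
      ∫⁻ p, π (Ioi p.1 ×ˢ Ioi p.2) ∂(volume.restrict (Ioi m)).prod (volume.restrict (Ioi m)) := by
  have hae := hπ.ae_mem_Icc_prod hμ hν
  rw [ofReal_integral_eq_lintegral_ofReal (hπ.integrable_of_continuous hμ hν (by fun_prop))
      (hae.mono fun z hz => mul_nonneg (sub_nonneg.2 hz.1.1) (sub_nonneg.2 hz.2.1)),
    ← lintegral_ofReal_sub_mul_ofReal_sub]
  exact lintegral_congr_ae (hae.mono fun z hz => ENNReal.ofReal_mul (sub_nonneg.2 hz.1.1))

end IsCouplingOf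

end CompactSupport

section Hoeffding

variable {μ ν : Measure ℝ} {m M : ℝ} {π₁ π₂ : Measure (ℝ × ℝ)}
  [IsProbabilityMeasure π₁] [IsProbabilityMeasure π₂]

lemma integral_mul_le_integral_mul_iff (h₁ : IsCouplingOf π₁ μ ν) (h₂ : IsCouplingOf π₂ μ ν)
    (hμ : μ (Icc m M)ᶜ = 0) (hν : ν (Icc m M)ᶜ = 0) :
    ∫ z, z.1 * z.2 ∂π₁ ≤ ∫ z, z.1 * z.2 ∂π₂ ↔
      ∫⁻ p, π₁ (Ioi p.1 ×ˢ Ioi p.2) ∂(volume.restrict (Ioi m)).prod (volume.restrict (Ioi m)) ≤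
      ∫⁻ p, π₂ (Ioi p.1 ×ˢ Ioi p.2) ∂(volume.restrict (Ioi m)).prod (volume.restrict (Ioi m)) := by
  rw [← h₁.ofReal_integral_sub_mul_sub_eq_lintegral hμ hν,
    ← h₂.ofReal_integral_sub_mul_sub_eq_lintegral hμ hν,
    ENNReal.ofReal_le_ofReal_iff (integral_nonneg_of_ae ((h₂.ae_mem_Icc_prod hμ hν).mono
      fun z hz => mul_nonneg (sub_nonneg.2 hz.1.1) (sub_nonneg.2 hz.2.1))),
    h₁.integral_sub_mul_sub hμ hν, h₂.integral_sub_mul_sub hμ hν]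
  constructor <;> intro h <;> linarith

end Hoeffding

section FrechetHoeffding

variable {μ ν : Measure ℝ} [IsProbabilityMeasure μ] [IsProbabilityMeasure ν] {m M : ℝ}
  {π : Measure (ℝ × ℝ)} [IsProbabilityMeasure π]

lemma IsCouplingOf.integral_mul_le_pCom (hπ : IsCouplingOf π μ ν) (hμ : μ (Icc m M)ᶜ = 0)
    (hν : ν (Icc m M)ᶜ = 0) : ∫ z, z.1 * z.2 ∂π ≤ ∫ z, z.1 * z.2 ∂(pCom μ ν) :=
  (integral_mul_le_integral_mul_iff hπ isCouplingOf_pCom hμ hν).2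
    (lintegral_mono fun p => hπ.measure_Ioi_prod_Ioi_le_pCom p.1 p.2)

lemma IsCouplingOf.integral_mul_pAnt_le (hπ : IsCouplingOf π μ ν) (hμ : μ (Icc m M)ᶜ = 0)
    (hν : ν (Icc m M)ᶜ = 0) : ∫ z, z.1 * z.2 ∂(pAnt μ ν) ≤ ∫ z, z.1 * z.2 ∂π :=
  (integral_mul_le_integral_mul_iff isCouplingOf_pAnt hπ hμ hν).2
    (lintegral_mono fun p => hπ.pAnt_le_measure_Ioi_prod_Ioi p.1 p.2)

end FrechetHoeffding

section Nondegenerate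

variable {μ ν : Measure ℝ} [IsProbabilityMeasure μ] [IsProbabilityMeasure ν] {m M : ℝ}

lemma exists_lt_cdf_pos_cdf_lt_one (hμ : ¬ ∃ x, μ = Measure.dirac x) :
    ∃ s₀ s₁, s₀ < s₁ ∧ 0 < cdf μ s₀ ∧ cdf μ s₁ < 1 := by
  obtain ⟨s, hs₀, hs₁⟩ : ∃ s, 0 < cdf μ s ∧ cdf μ s < 1 := by
    by_contra! h
    have hhalf : (1 / 2 : ℝ) ∈ Ioo 0 1 := by norm_num
    -- a cdf with values in `{0, 1}` jumps at the median
    refine hμ ⟨qtl μ (1 / 2), Measure.ext_of_Iic _ _ fun x => ?_⟩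
    rw [Measure.dirac_apply' _ measurableSet_Iic, ← ofReal_cdf]
    by_cases hx : qtl μ (1 / 2) ≤ x
    · have h1 : cdf μ x = 1 := le_antisymm (cdf_le_one μ x)
        (h x (by linarith [(qtl_le_iff_le_cdf hhalf).1 hx]))
      rw [h1, ENNReal.ofReal_one, indicator_of_mem (mem_Iic.2 hx), Pi.one_apply]
    · have h0 : cdf μ x = 0 := by
        refine le_antisymm (le_of_not_gt fun hpos => hx ?_) (cdf_nonneg μ x)
        exact (qtl_le_iff_le_cdf hhalf).2 (by linarith [h x hpos])
      rw [h0, ENNReal.ofReal_zero, indicator_of_notMem (mt mem_Iic.1 hx)]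
  have hright : ∀ᶠ y in 𝓝[>] s, s < y ∧ cdf μ y < 1 :=
    eventually_mem_nhdsWithin.and
      ((((cdf μ).right_continuous s).mono Ioi_subset_Ici_self).eventually (gt_mem_nhds hs₁))
  obtain ⟨s₁, hss₁, hs₁'⟩ := hright.exists
  exact ⟨s, s₁, hss₁, hs₀, hs₁'⟩

lemma le_of_cdf_pos (hμ : μ (Icc m M)ᶜ = 0) {x : ℝ} (hx : 0 < cdf μ x) : m ≤ x := by
  by_contra! hxm
  have h0 : μ (Iic x) = 0 :=
    measure_mono_null (fun y (hy : y ≤ x) (hy' : y ∈ Icc m M) => (hy'.1.trans hy).not_gt hxm) hμ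
  rw [← ofReal_cdf, ENNReal.ofReal_eq_zero] at h0
  linarith

lemma ofReal_one_sub_sub_add_le {a b ε : ℝ} (hε : 0 ≤ ε) (ha : ε ≤ a) (hb : ε ≤ b)
    (ha' : ε ≤ 1 - a) (hb' : ε ≤ 1 - b) :
    ENNReal.ofReal (1 - a - b) + ENNReal.ofReal ε ≤ ENNReal.ofReal (1 - max a b) :=
  calc ENNReal.ofReal (1 - a - b) + ENNReal.ofReal ε
      ≤ ENNReal.ofReal (max (1 - a - b) 0) + ENNReal.ofReal ε := by gcongr; exact le_max_left _ _
    _ = ENNReal.ofReal (max (1 - a - b) 0 + ε) := (ENNReal.ofReal_add (le_max_right _ _) hε).symm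
    _ ≤ ENNReal.ofReal (1 - max a b) := ENNReal.ofReal_le_ofReal (by grind)

lemma pAnt_Ioi_prod_Ioi_add_le_pCom {s₀ s₁ t₀ t₁ s t : ℝ} (hs : s ∈ Icc s₀ s₁)
    (ht : t ∈ Icc t₀ t₁) :
    pAnt μ ν (Ioi s ×ˢ Ioi t) +
        ENNReal.ofReal (min (min (cdf μ s₀) (cdf ν t₀)) (min (1 - cdf μ s₁) (1 - cdf ν t₁))) ≤
      pCom μ ν (Ioi s ×ˢ Ioi t) := by
  have hF₀ := monotone_cdf μ hs.1
  have hF₁ := monotone_cdf μ hs.2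
  have hG₀ := monotone_cdf ν ht.1
  have hG₁ := monotone_cdf ν ht.2
  rw [pAnt_Ioi_prod_Ioi, pCom_Ioi_prod_Ioi]
  apply ofReal_one_sub_sub_add_le
  · exact le_min (le_min (cdf_nonneg μ _) (cdf_nonneg ν _))
      (le_min (sub_nonneg.2 (cdf_le_one μ _)) (sub_nonneg.2 (cdf_le_one ν _)))
  · exact (min_le_left _ _).trans ((min_le_left _ _).trans hF₀)
  · exact (min_le_left _ _).trans ((min_le_right _ _).trans hG₀)
  · exact (min_le_right _ _).trans ((min_le_left _ _).trans (by linarith))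
  · exact (min_le_right _ _).trans ((min_le_right _ _).trans (by linarith))

lemma integral_mul_pAnt_lt_pCom (hμ : μ (Icc m M)ᶜ = 0) (hν : ν (Icc m M)ᶜ = 0)
    (hμd : ¬ ∃ x, μ = Measure.dirac x) (hνd : ¬ ∃ y, ν = Measure.dirac y) :
    ∫ z, z.1 * z.2 ∂(pAnt μ ν) < ∫ z, z.1 * z.2 ∂(pCom μ ν) := by
  obtain ⟨s₀, s₁, hs, hF₀, hF₁⟩ := exists_lt_cdf_pos_cdf_lt_one hμd
  obtain ⟨t₀, t₁, ht, hG₀, hG₁⟩ := exists_lt_cdf_pos_cdf_lt_one hνd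
  set ε := min (min (cdf μ s₀) (cdf ν t₀)) (min (1 - cdf μ s₁) (1 - cdf ν t₁))
  have hε : 0 < ε := lt_min (lt_min hF₀ hG₀) (lt_min (by linarith) (by linarith))
  set ρ := (volume.restrict (Ioi m)).prod (volume.restrict (Ioi m))
  set R := Ioc s₀ s₁ ×ˢ Ioc t₀ t₁
  have hR : MeasurableSet R := measurableSet_Ioc.prod measurableSet_Ioc
  have hρR : ρ R ≠ 0 := by
    rw [Measure.prod_prod, Measure.restrict_apply measurableSet_Ioc,
      Measure.restrict_apply measurableSet_Ioc,
      inter_eq_left.2 (Ioc_subset_Ioi_self.trans (Ioi_subset_Ioi (le_of_cdf_pos hμ hF₀))),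
      inter_eq_left.2 (Ioc_subset_Ioi_self.trans (Ioi_subset_Ioi (le_of_cdf_pos hν hG₀))),
      Real.volume_Ioc, Real.volume_Ioc]
    exact mul_ne_zero (ENNReal.ofReal_pos.2 (sub_pos.2 hs)).ne'
      (ENNReal.ofReal_pos.2 (sub_pos.2 ht)).ne'
  have hfin : ∫⁻ p, pAnt μ ν (Ioi p.1 ×ˢ Ioi p.2) ∂ρ ≠ ⊤ := by
    rw [← isCouplingOf_pAnt.ofReal_integral_sub_mul_sub_eq_lintegral hμ hν]
    exact ENNReal.ofReal_ne_top
  refine (lt_iff_lt_of_le_iff_le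
    (integral_mul_le_integral_mul_iff isCouplingOf_pCom isCouplingOf_pAnt hμ hν)).2 ?_
  calc ∫⁻ p, pAnt μ ν (Ioi p.1 ×ˢ Ioi p.2) ∂ρ
      < ∫⁻ p, pAnt μ ν (Ioi p.1 ×ˢ Ioi p.2) ∂ρ + ENNReal.ofReal ε * ρ R :=
        ENNReal.lt_add_right hfin (mul_ne_zero (ENNReal.ofReal_pos.2 hε).ne' hρR)
    _ = ∫⁻ p, (pAnt μ ν (Ioi p.1 ×ˢ Ioi p.2) + R.indicator (fun _ => ENNReal.ofReal ε) p) ∂ρ := by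
        rw [lintegral_add_right _ (measurable_const.indicator hR), lintegral_indicator_const hR]
    _ ≤ ∫⁻ p, pCom μ ν (Ioi p.1 ×ˢ Ioi p.2) ∂ρ := lintegral_mono fun p => ?_
  by_cases hp : p ∈ R
  · rw [indicator_of_mem hp]
    exact pAnt_Ioi_prod_Ioi_add_le_pCom ⟨hp.1.1.le, hp.1.2⟩ ⟨hp.2.1.le, hp.2.2⟩
  · rw [indicator_of_notMem hp, add_zero]
    exact isCouplingOf_pAnt.measure_Ioi_prod_Ioi_le_pCom p.1 p.2

end Nondegenerate

section Mixture

variable {μ ν : Measure ℝ} {l : ℝ}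

lemma ofReal_add_ofReal_one_sub (hl : l ∈ Icc (0 : ℝ) 1) :
    ENNReal.ofReal l + ENNReal.ofReal (1 - l) = 1 := by
  rw [← ENNReal.ofReal_add hl.1 (sub_nonneg.2 hl.2), add_sub_cancel, ENNReal.ofReal_one]

lemma integral_pXmix (hl : l ∈ Icc (0 : ℝ) 1) {f : ℝ × ℝ → ℝ} (hc : Integrable f (pCom μ ν))
    (ha : Integrable f (pAnt μ ν)) :
    ∫ z, f z ∂(pXmix μ ν l) = l * ∫ z, f z ∂(pCom μ ν) + (1 - l) * ∫ z, f z ∂(pAnt μ ν) := by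
  rw [pXmix, integral_add_measure (hc.smul_measure ENNReal.ofReal_ne_top)
      (ha.smul_measure ENNReal.ofReal_ne_top), integral_smul_measure, integral_smul_measure,
    ENNReal.toReal_ofReal hl.1, ENNReal.toReal_ofReal (sub_nonneg.2 hl.2), smul_eq_mul, smul_eq_mul]

variable [IsProbabilityMeasure μ] [IsProbabilityMeasure ν]

lemma isProbabilityMeasure_pXmix (hl : l ∈ Icc (0 : ℝ) 1) : IsProbabilityMeasure (pXmix μ ν l) :=
  ⟨by simp [pXmix, ofReal_add_ofReal_one_sub hl]⟩

lemma isCouplingOf_pXmix (hl : l ∈ Icc (0 : ℝ) 1) : IsCouplingOf (pXmix μ ν l) μ ν :=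
  ⟨by rw [pXmix, Measure.map_add _ _ measurable_fst, Measure.map_smul, Measure.map_smul,
      isCouplingOf_pCom.1, isCouplingOf_pAnt.1, ← add_smul, ofReal_add_ofReal_one_sub hl, one_smul],
    by rw [pXmix, Measure.map_add _ _ measurable_snd, Measure.map_smul, Measure.map_smul,
      isCouplingOf_pCom.2, isCouplingOf_pAnt.2, ← add_smul, ofReal_add_ofReal_one_sub hl,
      one_smul]⟩

lemma integral_mul_pXmix {m M : ℝ} (hμ : μ (Icc m M)ᶜ = 0) (hν : ν (Icc m M)ᶜ = 0)
    (hl : l ∈ Icc (0 : ℝ) 1) :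
    ∫ z, z.1 * z.2 ∂(pXmix μ ν l) =
      l * ∫ z, z.1 * z.2 ∂(pCom μ ν) + (1 - l) * ∫ z, z.1 * z.2 ∂(pAnt μ ν) :=
  integral_pXmix hl (isCouplingOf_pCom.integrable_of_continuous hμ hν (by fun_prop))
    (isCouplingOf_pAnt.integrable_of_continuous hμ hν (by fun_prop))

end Mixture

lemma qotCost_mul {X Y : Type*} [MeasurableSpace X] [MeasurableSpace Y] (F G : X × Y → ℝ)
    (π : Measure (X × Y)) :
    qotCost (fun z z' => F z * G z') π = (∫ z, F z ∂π) * ∫ z, G z ∂π := by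
  simp only [qotCost, integral_const_mul, integral_mul_const]

lemma exists_Icc_compl_null {μ ν : Measure ℝ} (hμ : ∃ K : Set ℝ, IsCompact K ∧ μ Kᶜ = 0)
    (hν : ∃ K : Set ℝ, IsCompact K ∧ ν Kᶜ = 0) :
    ∃ m M : ℝ, μ (Icc m M)ᶜ = 0 ∧ ν (Icc m M)ᶜ = 0 := by
  obtain ⟨K₁, hK₁, h₁⟩ := hμ
  obtain ⟨K₂, hK₂, h₂⟩ := hν
  obtain ⟨m, M, hsub⟩ := bddBelow_bddAbove_iff_subset_Icc.1
    ⟨(hK₁.union hK₂).bddBelow, (hK₁.union hK₂).bddAbove⟩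
  exact ⟨m, M, measure_mono_null (compl_subset_compl.2 (subset_union_left.trans hsub)) h₁,
    measure_mono_null (compl_subset_compl.2 (subset_union_right.trans hsub)) h₂⟩

lemma IsQuadratic2.exists_integral_eq {μ ν : Measure ℝ} {m M : ℝ} {f : ℝ → ℝ → ℝ}
    (hf : IsQuadratic2 f) (hμ : μ (Icc m M)ᶜ = 0) (hν : ν (Icc m M)ᶜ = 0) :
    ∃ C k : ℝ, ∀ π : Measure (ℝ × ℝ), IsProbabilityMeasure π → IsCouplingOf π μ ν →
      ∫ z, f z.1 z.2 ∂π = C + k * ∫ z, z.1 * z.2 ∂π := by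
  obtain ⟨a, b, c, d, e, k, hf⟩ := hf
  refine ⟨a + b * (∫ x, x ∂μ) + c * (∫ y, y ∂ν) + d * (∫ x, x ^ 2 ∂μ) + e * (∫ y, y ^ 2 ∂ν), k,
    fun π _ hπ => ?_⟩
  simp_rw [hf]
  exact hπ.integral_quadratic hμ hν a b c d e k

section Main

variable {μ ν : Measure ℝ} [IsProbabilityMeasure μ] [IsProbabilityMeasure ν] {m M : ℝ}

theorem exists_isQOTMinimizer_pXmix (hμ : μ (Icc m M)ᶜ = 0) (hν : ν (Icc m M)ᶜ = 0)
    {c : ℝ × ℝ → ℝ × ℝ → ℝ} {Φ : ℝ → ℝ} (hΦ : Continuous Φ)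
    (hc : ∀ π : Measure (ℝ × ℝ), IsProbabilityMeasure π → IsCouplingOf π μ ν →
      qotCost c π = Φ (∫ z, z.1 * z.2 ∂π)) :
    ∃ l ∈ Icc (0 : ℝ) 1, IsQOTMinimizer c μ ν (pXmix μ ν l) := by
  set A := ∫ z, z.1 * z.2 ∂(pAnt μ ν)
  set B := ∫ z, z.1 * z.2 ∂(pCom μ ν)
  obtain ⟨l, hl, hmin⟩ := isCompact_Icc.exists_isMinOn (nonempty_Icc.2 zero_le_one)
    (hΦ.comp (show Continuous fun l : ℝ => (1 - l) * A + l * B by fun_prop)).continuousOn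
  have := isProbabilityMeasure_pXmix (μ := μ) (ν := ν) hl
  refine ⟨l, hl, inferInstance, isCouplingOf_pXmix hl, fun π _ hπ => ?_⟩
  have hseg : ∫ z, z.1 * z.2 ∂π ∈ segment ℝ A B := by
    rw [segment_eq_Icc ((hπ.integral_mul_pAnt_le hμ hν).trans (hπ.integral_mul_le_pCom hμ hν))]
    exact ⟨hπ.integral_mul_pAnt_le hμ hν, hπ.integral_mul_le_pCom hμ hν⟩
  rw [segment_eq_image] at hseg
  obtain ⟨l', hl', hl'π⟩ := hseg
  have h : Φ ((1 - l) * A + l * B) ≤ Φ ((1 - l') * A + l' * B) := isMinOn_iff.1 hmin l' hl'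
  simp only [smul_eq_mul] at hl'π
  rw [hc _ inferInstance (isCouplingOf_pXmix hl), hc π ‹_› hπ, integral_mul_pXmix hμ hν hl, ← hl'π]
  convert h using 2
  ring

theorem exists_quadratic_cost_unique_minimizer_pXmix (hμ : μ (Icc m M)ᶜ = 0)
    (hν : ν (Icc m M)ᶜ = 0) (hμd : ¬ ∃ x, μ = Measure.dirac x)
    (hνd : ¬ ∃ y, ν = Measure.dirac y) {l : ℝ} (hl : l ∈ Icc (0 : ℝ) 1) :
    ∃ f g : ℝ → ℝ → ℝ, IsQuadratic2 f ∧ IsQuadratic2 g ∧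
      ∀ l' ∈ Icc (0 : ℝ) 1, l' ≠ l →
        qotCost (fun z z' => f z.1 z.2 * g z'.1 z'.2) (pXmix μ ν l) <
          qotCost (fun z z' => f z.1 z.2 * g z'.1 z'.2) (pXmix μ ν l') := by
  set A := ∫ z, z.1 * z.2 ∂(pAnt μ ν)
  set B := ∫ z, z.1 * z.2 ∂(pCom μ ν)
  set c₀ := l * B + (1 - l) * A
  have hcost : ∀ l' ∈ Icc (0 : ℝ) 1,
      qotCost (fun z z' => (z.1 * z.2 - c₀) * (z'.1 * z'.2 - c₀)) (pXmix μ ν l') =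
        ((l' - l) * (B - A)) ^ 2 := by
    intro l' hl'
    have := isProbabilityMeasure_pXmix (μ := μ) (ν := ν) hl'
    rw [qotCost_mul (fun z => z.1 * z.2 - c₀) (fun z => z.1 * z.2 - c₀),
      integral_sub ((isCouplingOf_pXmix hl').integrable_of_continuous hμ hν (by fun_prop))
        (integrable_const _), integral_const, probReal_univ, one_smul, integral_mul_pXmix hμ hν hl']
    ring
  have hq : IsQuadratic2 fun x y => x * y - c₀ := ⟨-c₀, 0, 0, 0, 0, 1, fun x y => by ring⟩
  refine ⟨_, _, hq, hq, fun l' hl' hne => ?_⟩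
  rw [hcost l hl, hcost l' hl', sub_self, zero_mul, zero_pow two_ne_zero]
  exact pow_two_pos_of_ne_zero (mul_ne_zero (sub_ne_zero.2 hne)
    (sub_ne_zero.2 (integral_mul_pAnt_lt_pCom hμ hν hμd hνd).ne'))

end Main

/-- Proposition: type-XY product of two quadratic cost functions. -/
theorem qot_quadratic_product_cost
    (μ ν : Measure ℝ) [IsProbabilityMeasure μ] [IsProbabilityMeasure ν]
    (hμK : ∃ K : Set ℝ, IsCompact K ∧ μ Kᶜ = 0)
    (hνK : ∃ K : Set ℝ, IsCompact K ∧ ν Kᶜ = 0) :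
    (∀ f g : ℝ → ℝ → ℝ, IsQuadratic2 f → IsQuadratic2 g →
      ∃ l ∈ Icc (0:ℝ) 1,
        IsQOTMinimizer (fun z z' => f z.1 z.2 * g z'.1 z'.2) μ ν (pXmix μ ν l)) ∧
    ((¬ ∃ x : ℝ, μ = Measure.dirac x) → (¬ ∃ y : ℝ, ν = Measure.dirac y) →
      ∀ l ∈ Icc (0:ℝ) 1, ∃ f g : ℝ → ℝ → ℝ, IsQuadratic2 f ∧ IsQuadratic2 g ∧
        ∀ l' ∈ Icc (0:ℝ) 1, l' ≠ l →
          qotCost (fun z z' => f z.1 z.2 * g z'.1 z'.2) (pXmix μ ν l) <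
            qotCost (fun z z' => f z.1 z.2 * g z'.1 z'.2) (pXmix μ ν l')) := by
  obtain ⟨m, M, hμ, hν⟩ := exists_Icc_compl_null hμK hνK
  refine ⟨fun f g hf hg => ?_, fun hμd hνd l hl =>
    exists_quadratic_cost_unique_minimizer_pXmix hμ hν hμd hνd hl⟩
  obtain ⟨Cf, kf, hCf⟩ := hf.exists_integral_eq hμ hν
  obtain ⟨Cg, kg, hCg⟩ := hg.exists_integral_eq hμ hν
  refine exists_isQOTMinimizer_pXmix hμ hν (Φ := fun I => (Cf + kf * I) * (Cg + kg * I))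
    (by fun_prop) fun π hπp hπ => ?_
  rw [qotCost_mul (fun z => f z.1 z.2) (fun z => g z.1 z.2), hCf π hπp hπ, hCg π hπp hπ]
end
end
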